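/- For a plane tree T with Łukasiewicz path W, for every vertex x, the number R(x) of vertices y > x (in lexicographic order) whose parent is a strict ancestor of x equals W(x). -/

import Mathlib

/-- Number of children in `T` of the vertex `x` (vertices are finite sequences of integers,
the parent of a non-empty sequence is obtained by dropping its last entry). -/
def kch (T : Finset (List ℕ)) (x : List ℕ) : ℕ :=
  (T.filter (fun y => y ≠ [] ∧ y.dropLast = x)).card

/-- `T` is a plane tree: it contains the root `[]`, is stable under taking parents, and the
children of a vertex `x` with `kch T x` children are exactly `x ++ [i]` for `1 ≤ i ≤ kch T x`. -/
def IsPlaneTree (T : Finset (List ℕ)) : Prop :=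
  [] ∈ T ∧ (∀ x ∈ T, x ≠ [] → x.dropLast ∈ T) ∧
    ∀ x ∈ T, ∀ i : ℕ, (x ++ [i] ∈ T ↔ 1 ≤ i ∧ i ≤ kch T x)

/-- The Łukasiewicz path of `T`: `W 0 = 0` and `W (j+1) = W j + k_{x_j} - 1`, where
`x_0 < x_1 < ⋯` are the vertices of `T` in lexicographic order. -/
def lukW (T : Finset (List ℕ)) (m : ℕ) : ℤ :=
  ∑ i ∈ Finset.range m, ((kch T ((T.sort (· ≤ ·)).getD i []) : ℤ) - 1)

/-!
Summing `kch T z - 1` over the vertices `z < x` counts the non-root vertices whose parent lies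
before `x`, minus the number of vertices before `x`. A parent `p` of `y` lies before `x` exactly
when `y ≤ x`, or when `x < y` and `p` is a proper prefix of `x`: otherwise `p` and `x` first
differ at a position inside `p`, and then `y` lies before `x` too. Since the root is the least
vertex, the non-root vertices `y ≤ x` are as many as the vertices `y < x`, and what is left is
exactly the count `R x`.
-/

open Finset

namespace List

variable {α : Type*}

theorem IsPrefix.lt_of_ne [LT α] {p q : List α} (h : p <+: q) (hne : p ≠ q) : p < q := by
  obtain ⟨t, rfl⟩ := h
  obtain _ | ⟨a, t⟩ := t
  · simp at hne
  · clear hne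
    show Lex (· < ·) p (p ++ a :: t)
    induction p with
    | nil => exact .nil
    | cons b p ih => exact .cons ih

theorem lt_of_lt_of_not_isPrefix_of_isPrefix [LT α] {u x y : List α} (h : u < x)
    (hux : ¬u <+: x) (huy : u <+: y) : y < x := by
  obtain ⟨t, rfl⟩ := huy
  induction (h : Lex (· < ·) u x) with
  | nil => exact absurd nil_prefix hux
  | cons _ ih => exact .cons (ih fun hp => hux (cons_prefix_cons.mpr ⟨rfl, hp⟩))
  | rel hab => exact .rel hab

theorem dropLast_lt [LT α] {y : List α} (hy : y ≠ []) : y.dropLast < y :=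
  (dropLast_prefix y).lt_of_ne fun h => by
    have := congrArg length h
    simp only [length_dropLast] at this
    have := length_pos_iff.mpr hy
    omega

theorem dropLast_lt_iff [LinearOrder α] {x y : List α} (hy : y ≠ []) :
    y.dropLast < x ↔ y ≤ x ∨ x < y ∧ y.dropLast ≠ x ∧ y.dropLast <+: x := by
  constructor
  · intro h
    refine (le_or_gt y x).imp_right fun hxy => ⟨hxy, h.ne, ?_⟩
    by_contra hpx
    exact (lt_of_lt_of_not_isPrefix_of_isPrefix h hpx (dropLast_prefix y)).not_gt hxy
  · rintro (hyx | ⟨-, hne, hpx⟩)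
    · exact (dropLast_lt hy).trans_le hyx
    · exact hpx.lt_of_ne hne

theorem sum_range_getD_eq_sum_take {M : Type*} [AddCommMonoid M] (l : List α) (d : α)
    (f : α → M) {m : ℕ} (hm : m ≤ l.length) :
    ∑ i ∈ Finset.range m, f (l.getD i d) = ((l.take m).map f).sum := by
  induction m with
  | zero => simp
  | succ m ih =>
    rw [Finset.sum_range_succ, ih (by omega), getD_eq_getElem _ _ hm, map_take, map_take,
      sum_take_succ _ _ (by simpa using hm), getElem_map]

theorem take_idxOf_eq_filter [Preorder α] [BEq α] [LawfulBEq α] {x : α} [DecidablePred (· < x)]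
    {l : List α} (hl : l.Pairwise (· < ·)) (hx : x ∈ l) :
    l.take (l.idxOf x) = l.filter (· < x) := by
  induction l with
  | nil => simp at hx
  | cons a t ih =>
    rw [pairwise_cons] at hl
    by_cases hax : a = x
    · subst hax
      simp only [idxOf_cons_self, take_zero, filter_cons, lt_irrefl, decide_false]
      exact (filter_eq_nil_iff.mpr fun b hb => by simpa using (hl.1 b hb).not_gt).symm
    · have hxt : x ∈ t := (mem_cons.mp hx).resolve_left (Ne.symm hax)
      rw [idxOf_cons_ne _ (by simpa using hax), take_succ_cons, ih hl.2 hxt,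
        filter_cons_of_pos (by simpa using hl.1 x hxt)]

end List

namespace Finset

variable {α : Type*} [LinearOrder α]

theorem sum_range_idxOf_sort {M : Type*} [AddCommMonoid M] [BEq α] [LawfulBEq α] {x : α}
    [DecidablePred (· < x)] (s : Finset α) (f : α → M) (d : α) (hx : x ∈ s) :
    ∑ i ∈ range ((s.sort (· ≤ ·)).idxOf x), f ((s.sort (· ≤ ·)).getD i d)
      = ∑ z ∈ s with z < x, f z := by
  have hxl : x ∈ s.sort (· ≤ ·) := (mem_sort _).mpr hx
  rw [List.sum_range_getD_eq_sum_take _ _ _ (List.idxOf_lt_length_iff.mpr hxl).le,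
    List.take_idxOf_eq_filter (sortedLT_sort s).pairwise hxl,
    ← List.sum_toFinset _ ((sort_nodup s _).filter _), List.toFinset_filter, sort_toFinset]
  simp only [decide_eq_true_eq]

theorem card_filter_ne_le_eq_card_filter_lt {s : Finset α} {a b : α} (ha : a ∈ s) (hb : b ∈ s)
    (hab : a ≤ b) : #{y ∈ s | y ≠ a ∧ y ≤ b} = #{y ∈ s | y < b} := by
  have hle : #{y ∈ s | y ≤ b} = #{y ∈ s | y < b} + 1 := by
    rw [← card_insert_of_notMem (by simp : b ∉ {y ∈ s | y < b})]
    congr 1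
    ext y
    simp only [mem_filter, mem_insert, le_iff_lt_or_eq]
    grind
  have hne : #{y ∈ s | y ≠ a ∧ y ≤ b} + 1 = #{y ∈ s | y ≤ b} := by
    rw [← card_erase_add_one (s := {y ∈ s | y ≤ b}) (mem_filter.mpr ⟨ha, hab⟩)]
    congr 2
    ext y
    simp only [mem_filter, mem_erase]
    tauto
  omega

end Finset

theorem card_filter_dropLast_lt {α : Type*} [LinearOrder α] (T : Finset (List α)) (x : List α) :
    #{y ∈ T | y ≠ [] ∧ y.dropLast < x}
      = #{y ∈ T | y ≠ [] ∧ y ≤ x} + #{y ∈ T | x < y ∧ y.dropLast ≠ x ∧ y.dropLast <+: x} := by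
  rw [← card_union_of_disjoint, ← filter_or]
  · congr 1
    ext y
    simp only [mem_filter]
    constructor
    · rintro ⟨hyT, hy, h⟩
      exact ⟨hyT, ((List.dropLast_lt_iff hy).mp h).imp (⟨hy, ·⟩) id⟩
    · rintro ⟨hyT, ⟨hy, hyx⟩ | hR⟩
      · exact ⟨hyT, hy, (List.dropLast_lt_iff hy).mpr (.inl hyx)⟩
      · have hy : y ≠ [] := by rintro rfl; exact List.not_lt_nil _ hR.1
        exact ⟨hyT, hy, (List.dropLast_lt_iff hy).mpr (.inr hR)⟩
  · exact disjoint_filter.mpr fun y _ h1 h2 => h1.2.not_gt h2.1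

theorem sum_kch_filter {T : Finset (List ℕ)} (hT : ∀ x ∈ T, x ≠ [] → x.dropLast ∈ T)
    (p : List ℕ → Prop) [DecidablePred p] :
    ∑ z ∈ T with p z, kch T z = #{y ∈ T | y ≠ [] ∧ p y.dropLast} := by
  rw [card_eq_sum_card_fiberwise (f := List.dropLast) (t := {z ∈ T | p z})]
  · refine sum_congr rfl fun z hz => ?_
    rw [kch, filter_filter]
    congr 1
    ext y
    simp only [mem_filter] at hz ⊢
    grind
  · intro y hy
    simp only [coe_filter, Set.mem_ofPred_eq] at hy ⊢
    exact ⟨hT y hy.1 hy.2.1, hy.2.2⟩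

/-- In a plane tree `T` with Łukasiewicz path `W`, for every vertex `x`, the number `R x` of
vertices `y > x` (in lexicographic order) whose parent is a strict ancestor of `x`
(that is, `y.dropLast` is a proper prefix of `x`) equals `W x`, where `W x` denotes the value
of `W` at the lexicographic index of `x`. -/
theorem lukasiewicz_path_right_count (T : Finset (List ℕ)) (hT : IsPlaneTree T)
    (x : List ℕ) (hx : x ∈ T) :
    ((T.filter (fun y => x < y ∧ y.dropLast ≠ x ∧ y.dropLast <+: x)).card : ℤ)
      = lukW T ((T.sort (· ≤ ·)).idxOf x) := by
  obtain ⟨hroot, hparent, -⟩ := hT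
  have hcount := card_filter_dropLast_lt T x
  have hbelow : #{y ∈ T | y ≠ [] ∧ y ≤ x} = #{y ∈ T | y < x} := by
    convert card_filter_ne_le_eq_card_filter_lt hroot hx (not_lt.mp (List.not_lt_nil x))
  rw [← sum_kch_filter hparent (· < x), hbelow] at hcount
  rw [lukW, sum_range_idxOf_sort T (fun z => (kch T z : ℤ) - 1) [] hx, sum_sub_distrib,
    ← Nat.cast_sum, hcount]
  simp
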